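/- arXiv:1902.09622 — 3 statements merged into one kernel-verified Lean document; each statement's English description precedes it below -/
import Mathlib

section
/- Let S be a discrete semigroup with a net F in P_f(S), and let K = {A ⊆ S : d*_F(S \ A) = 0}. Then K is a filter on S (closed under finite intersections, closed upward, and not containing the empty set). -/
open scoped Classical symmDiff

/-- The translate `F · s` of a finite piece `F` by an element of `S ∪ {1}`
(`none` meaning "no shift"). -/
def netShift {S : Type*} [Mul S] (F : Set S) : Option S → Set S
  | none => F
  | some t => (· * t) '' F

/-- Upper Banach density of `A ⊆ S` with respect to a net `F = ⟨F i⟩` of finite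
nonempty subsets of `S`, indexed by a directed preorder `I`. -/
noncomputable def uBD {S : Type*} [Mul S] {I : Type*} [Preorder I]
    (F : I → Set S) (A : Set S) : ℝ :=
  sSup {α : ℝ | ∀ i₀ : I, ∃ i, i₀ ≤ i ∧ ∃ s : Option S,
    α * ((F i).ncard : ℝ) ≤ ((A ∩ netShift (F i) s).ncard : ℝ)}

/-!
The upper Banach density is subadditive: past a common index of the net, the relative counts of
`A` and `B` in every translate of `F i` are below `d*(A) + ε` and `d*(B) + ε`, and counts add
under union. Hence the sets of density zero form an ideal and their complements a filter, which is
proper because `d*(S) = 1`.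
-/

namespace UpperBanachDensity

variable {S : Type*} [Mul S] {I : Type*} [Preorder I] {F : I → Set S}

/-- `uBD F A` is by definition `sSup (levels F A)`. -/
def levels (F : I → Set S) (A : Set S) : Set ℝ :=
  {α : ℝ | ∀ i₀ : I, ∃ i, i₀ ≤ i ∧ ∃ s : Option S,
    α * ((F i).ncard : ℝ) ≤ ((A ∩ netShift (F i) s).ncard : ℝ)}

theorem zero_mem_levels (F : I → Set S) (A : Set S) : (0 : ℝ) ∈ levels F A :=
  fun i₀ => ⟨i₀, le_rfl, none, by simp⟩

theorem netShift_finite {T : Set S} (hT : T.Finite) (s : Option S) : (netShift T s).Finite := by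
  cases s with
  | none => exact hT
  | some t => exact hT.image _

theorem ncard_inter_netShift_le {T : Set S} (hT : T.Finite) (A : Set S) (s : Option S) :
    (A ∩ netShift T s).ncard ≤ T.ncard := by
  refine (Set.ncard_le_ncard Set.inter_subset_right (netShift_finite hT s)).trans ?_
  cases s with
  | none => exact le_rfl
  | some t => exact Set.ncard_image_le hT

theorem le_of_mem_levels (hfin : ∀ i, (F i).Finite) (hne : ∀ i, (F i).Nonempty)
    {A : Set S} {α β : ℝ} (hα : α ∈ levels F A) {i₀ : I}
    (hβ : ∀ i, i₀ ≤ i → ∀ s, ((A ∩ netShift (F i) s).ncard : ℝ) ≤ β * (F i).ncard) :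
    α ≤ β := by
  obtain ⟨i, hi, s, hle⟩ := hα i₀
  have hpos : (0 : ℝ) < (F i).ncard := by exact_mod_cast (Set.ncard_pos (hfin i)).mpr (hne i)
  exact le_of_mul_le_mul_right (hle.trans (hβ i hi s)) hpos

theorem uBD_le_of_eventually (hfin : ∀ i, (F i).Finite) (hne : ∀ i, (F i).Nonempty)
    {A : Set S} {β : ℝ} {i₀ : I}
    (hβ : ∀ i, i₀ ≤ i → ∀ s, ((A ∩ netShift (F i) s).ncard : ℝ) ≤ β * (F i).ncard) :
    uBD F A ≤ β :=
  csSup_le ⟨0, zero_mem_levels F A⟩ fun _ hα => le_of_mem_levels hfin hne hα hβ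

variable [Nonempty I]

theorem levels_subset_Iic_one (hfin : ∀ i, (F i).Finite) (hne : ∀ i, (F i).Nonempty)
    (A : Set S) : levels F A ⊆ Set.Iic 1 := by
  refine fun α hα => le_of_mem_levels hfin hne (i₀ := Classical.arbitrary I) hα fun i _ s => ?_
  rw [one_mul]
  exact_mod_cast ncard_inter_netShift_le (hfin i) A s

theorem bddAbove_levels (hfin : ∀ i, (F i).Finite) (hne : ∀ i, (F i).Nonempty) (A : Set S) :
    BddAbove (levels F A) :=
  ⟨1, levels_subset_Iic_one hfin hne A⟩

theorem uBD_nonneg (hfin : ∀ i, (F i).Finite) (hne : ∀ i, (F i).Nonempty) (A : Set S) :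
    0 ≤ uBD F A :=
  le_csSup (bddAbove_levels hfin hne A) (zero_mem_levels F A)

theorem uBD_mono (hfin : ∀ i, (F i).Finite) (hne : ∀ i, (F i).Nonempty) {A B : Set S}
    (h : A ⊆ B) : uBD F A ≤ uBD F B := by
  refine csSup_le_csSup (bddAbove_levels hfin hne B) ⟨0, zero_mem_levels F A⟩ ?_
  intro α hα i₀
  obtain ⟨i, hi, s, hle⟩ := hα i₀
  refine ⟨i, hi, s, hle.trans ?_⟩
  exact_mod_cast Set.ncard_le_ncard (Set.inter_subset_inter_left _ h)
    ((netShift_finite (hfin i) s).subset Set.inter_subset_right)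

theorem uBD_univ (hfin : ∀ i, (F i).Finite) (hne : ∀ i, (F i).Nonempty) :
    uBD F Set.univ = 1 := by
  refine le_antisymm (csSup_le ⟨0, zero_mem_levels F _⟩ (levels_subset_Iic_one hfin hne _)) ?_
  exact le_csSup (bddAbove_levels hfin hne _) fun i₀ => ⟨i₀, le_rfl, none, by simp [netShift]⟩

theorem eventually_lt_of_uBD_lt (hfin : ∀ i, (F i).Finite) (hne : ∀ i, (F i).Nonempty)
    {A : Set S} {β : ℝ} (h : uBD F A < β) :
    ∃ i₀, ∀ i, i₀ ≤ i → ∀ s, ((A ∩ netShift (F i) s).ncard : ℝ) < β * (F i).ncard := by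
  have hβ : β ∉ levels F A := fun hβ => h.not_ge (le_csSup (bddAbove_levels hfin hne A) hβ)
  simpa [levels] using hβ

theorem uBD_union_le [IsDirectedOrder I] (hfin : ∀ i, (F i).Finite)
    (hne : ∀ i, (F i).Nonempty) (A B : Set S) : uBD F (A ∪ B) ≤ uBD F A + uBD F B := by
  refine le_of_forall_pos_le_add fun ε hε => ?_
  obtain ⟨iA, hA⟩ := eventually_lt_of_uBD_lt hfin hne (by linarith : uBD F A < uBD F A + ε / 2)
  obtain ⟨iB, hB⟩ := eventually_lt_of_uBD_lt hfin hne (by linarith : uBD F B < uBD F B + ε / 2)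
  obtain ⟨i₀, hiA, hiB⟩ := exists_ge_ge iA iB
  refine uBD_le_of_eventually hfin hne (i₀ := i₀) fun i hi s => ?_
  have hsplit : (((A ∪ B) ∩ netShift (F i) s).ncard : ℝ) ≤
      (A ∩ netShift (F i) s).ncard + (B ∩ netShift (F i) s).ncard := by
    rw [Set.union_inter_distrib_right]
    exact_mod_cast Set.ncard_union_le _ _
  linarith [hA i (hiA.trans hi) s, hB i (hiB.trans hi) s]

end UpperBanachDensity

open UpperBanachDensity in
theorem density_zero_complements_form_filter {S : Type*} [Semigroup S]
    {I : Type*} [Preorder I] [Nonempty I]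
    (F : I → Set S) (hfin : ∀ i, (F i).Finite) (hne : ∀ i, (F i).Nonempty)
    (hdir : ∀ i j : I, ∃ k, i ≤ k ∧ j ≤ k) :
    (∀ A B : Set S, uBD F Aᶜ = 0 → uBD F Bᶜ = 0 → uBD F (A ∩ B)ᶜ = 0) ∧
    (∀ A B : Set S, uBD F Aᶜ = 0 → A ⊆ B → uBD F Bᶜ = 0) ∧
    ¬ uBD F (∅ : Set S)ᶜ = 0 := by
  have : IsDirectedOrder I := ⟨hdir⟩
  refine ⟨fun A B hA hB => ?_, fun A B hA hAB => ?_, ?_⟩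
  · refine le_antisymm ?_ (uBD_nonneg hfin hne _)
    simpa [Set.compl_inter, hA, hB] using uBD_union_le hfin hne Aᶜ Bᶜ
  · exact le_antisymm (hA ▸ uBD_mono hfin hne (Set.compl_subset_compl.mpr hAB))
      (uBD_nonneg hfin hne _)
  · simp [uBD_univ hfin hne]
end

section
/- Let S and W be discrete semigroups each with an identity element, with nets E = ⟨E_i⟩_{i∈I} in P_f(S) and F = ⟨F_j⟩_{j∈J} in P_f(W). Define the product net E*F = ⟨E_i × F_j⟩_{(i,j)∈I×J} with the product partial order on I×J. Then for all A ⊆ S and B ⊆ W, d*_{E*F}(A × B) = d*_E(A) · d*_F(B). -/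
open scoped Classical symmDiff

/-!
A shifted piece of the product net is a product of shifted pieces,
`(A × B) ∩ (E i × F j)·(s, t) = (A ∩ E i·s) × (B ∩ F j·t)`, so relative densities multiply.
Densities `α, β` attained cofinally along `E` and `F` therefore give `α β` cofinally along
`E * F`, where a shift present in only one factor is completed by the identity of the other.
Conversely, beyond some index every relative density along `E` stays below any `a > d*_E(A)`,
and similarly along `F`, so every density attained cofinally along `E * F` is at most `a b`.
-/

open Set

section netShift

variable {S W : Type*}

lemma netShift_finite [Mul S] {F : Set S} (hF : F.Finite) (s : Option S) :
    (netShift F s).Finite := by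
  cases s with
  | none => exact hF
  | some t => exact hF.image _

lemma ncard_netShift_le [Mul S] {F : Set S} (hF : F.Finite) (s : Option S) :
    (netShift F s).ncard ≤ F.ncard := by
  cases s with
  | none => exact le_rfl
  | some t => exact ncard_image_le hF

lemma netShift_some_getD_one [MulOneClass S] (F : Set S) (s : Option S) :
    netShift F (some (s.getD 1)) = netShift F s := by
  cases s with
  | none => simp [netShift]
  | some t => rfl

lemma netShift_prod [Mul S] [Mul W] (E : Set S) (F : Set W) (q : Option (S × W)) :
    netShift (E ×ˢ F) q = netShift E (q.map Prod.fst) ×ˢ netShift F (q.map Prod.snd) := by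
  cases q with
  | none => rfl
  | some st =>
    simp only [netShift, Option.map_some]
    rw [prod_image_image_eq]
    rfl

lemma ncard_prod_inter_netShift_prod [Mul S] [Mul W] (A E : Set S) (B F : Set W)
    (q : Option (S × W)) :
    ((A ×ˢ B) ∩ netShift (E ×ˢ F) q).ncard =
      (A ∩ netShift E (q.map Prod.fst)).ncard * (B ∩ netShift F (q.map Prod.snd)).ncard := by
  rw [netShift_prod, prod_inter_prod, ncard_prod]

end netShift

section uBDSet

variable {S I : Type*} [Mul S] [Preorder I] (F : I → Set S) (A : Set S)

def uBDSet : Set ℝ :=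
  {α : ℝ | ∀ i₀ : I, ∃ i, i₀ ≤ i ∧ ∃ s : Option S,
    α * ((F i).ncard : ℝ) ≤ ((A ∩ netShift (F i) s).ncard : ℝ)}

lemma zero_mem_uBDSet : (0 : ℝ) ∈ uBDSet F A :=
  fun i₀ => ⟨i₀, le_rfl, none, by simp⟩

variable {F A}

lemma mem_uBDSet_of_le {α β : ℝ} (hβα : β ≤ α) (hα : α ∈ uBDSet F A) : β ∈ uBDSet F A := by
  intro i₀
  obtain ⟨i, hi, s, hs⟩ := hα i₀
  exact ⟨i, hi, s, (mul_le_mul_of_nonneg_right hβα (Nat.cast_nonneg _)).trans hs⟩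

lemma mem_uBDSet_of_lt_uBD {α : ℝ} (hα : α < uBD F A) : α ∈ uBDSet F A := by
  obtain ⟨β, hβ, hαβ⟩ := exists_lt_of_lt_csSup ⟨0, zero_mem_uBDSet F A⟩ hα
  exact mem_uBDSet_of_le hαβ.le hβ

variable [Nonempty I] (hFfin : ∀ i, (F i).Finite) (hFne : ∀ i, (F i).Nonempty)
include hFfin hFne

lemma bddAbove_uBDSet : BddAbove (uBDSet F A) := by
  refine ⟨1, fun α hα => ?_⟩
  obtain ⟨i, -, s, hs⟩ := hα (Classical.arbitrary I)
  have hcard : (A ∩ netShift (F i) s).ncard ≤ (F i).ncard :=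
    (ncard_le_ncard inter_subset_right (netShift_finite (hFfin i) s)).trans
      (ncard_netShift_le (hFfin i) s)
  have hpos : (0 : ℝ) < (F i).ncard := by exact_mod_cast (ncard_pos (hFfin i)).mpr (hFne i)
  have : α * (F i).ncard ≤ 1 * (F i).ncard := by
    rw [one_mul]; exact hs.trans (by exact_mod_cast hcard)
  exact le_of_mul_le_mul_right this hpos

lemma le_uBD_of_mem_uBDSet {α : ℝ} (hα : α ∈ uBDSet F A) : α ≤ uBD F A :=
  le_csSup (bddAbove_uBDSet hFfin hFne) hα

lemma uBD_nonneg : 0 ≤ uBD F A :=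
  le_uBD_of_mem_uBDSet hFfin hFne (zero_mem_uBDSet F A)

lemma exists_forall_ncard_inter_netShift_lt {a : ℝ} (ha : uBD F A < a) :
    ∃ i₀, ∀ i, i₀ ≤ i → ∀ s, ((A ∩ netShift (F i) s).ncard : ℝ) < a * (F i).ncard := by
  by_contra! h
  exact ha.not_ge (le_uBD_of_mem_uBDSet hFfin hFne h)

end uBDSet

section prod

variable {S W I J : Type*} [Preorder I] [Preorder J] {E : I → Set S} {F : J → Set W}
  {A : Set S} {B : Set W}

lemma mul_mem_uBDSet_prod [MulOneClass S] [MulOneClass W] {α β : ℝ}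
    (hα : α ∈ uBDSet E A) (hβ : β ∈ uBDSet F B) (hβ0 : 0 ≤ β) :
    α * β ∈ uBDSet (fun p : I × J => E p.1 ×ˢ F p.2) (A ×ˢ B) := by
  rintro ⟨i₀, j₀⟩
  obtain ⟨i, hi, s, hs⟩ := hα i₀
  obtain ⟨j, hj, t, ht⟩ := hβ j₀
  refine ⟨(i, j), ⟨hi, hj⟩, some (s.getD 1, t.getD 1), ?_⟩
  simp only [ncard_prod_inter_netShift_prod, Option.map_some, netShift_some_getD_one,
    ncard_prod, Nat.cast_mul]
  calc α * β * ((E i).ncard * (F j).ncard)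
      = (α * (E i).ncard) * (β * (F j).ncard) := by ring
    _ ≤ _ := mul_le_mul hs ht (by positivity) (Nat.cast_nonneg _)

lemma le_mul_of_mem_uBDSet_prod [Mul S] [Mul W] [Nonempty I] [Nonempty J]
    (hEfin : ∀ i, (E i).Finite) (hEne : ∀ i, (E i).Nonempty)
    (hFfin : ∀ j, (F j).Finite) (hFne : ∀ j, (F j).Nonempty) {γ a b : ℝ}
    (hγ : γ ∈ uBDSet (fun p : I × J => E p.1 ×ˢ F p.2) (A ×ˢ B))
    (ha : uBD E A < a) (hb : uBD F B < b) : γ ≤ a * b := by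
  obtain ⟨i₀, hA⟩ := exists_forall_ncard_inter_netShift_lt hEfin hEne ha
  obtain ⟨j₀, hB⟩ := exists_forall_ncard_inter_netShift_lt hFfin hFne hb
  obtain ⟨⟨i, j⟩, ⟨hi, hj⟩, q, hq⟩ := hγ (i₀, j₀)
  have hA := hA i hi (q.map Prod.fst)
  have hB := hB j hj (q.map Prod.snd)
  simp only [ncard_prod_inter_netShift_prod, ncard_prod, Nat.cast_mul] at hq
  have hpos : (0 : ℝ) < (E i).ncard * (F j).ncard := by
    have := (ncard_pos (hEfin i)).mpr (hEne i)
    have := (ncard_pos (hFfin j)).mpr (hFne j)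
    positivity
  refine le_of_mul_le_mul_right (hq.trans ?_) hpos
  calc _ ≤ (a * (E i).ncard) * (b * (F j).ncard) :=
        mul_le_mul hA.le hB.le (Nat.cast_nonneg _) ((Nat.cast_nonneg _).trans hA.le)
    _ = a * b * ((E i).ncard * (F j).ncard) := by ring

end prod

theorem uBD_prod_general {S W : Type*} [Monoid S] [Monoid W]
    {I J : Type*} [Preorder I] [Preorder J] [Nonempty I] [Nonempty J]
    (E : I → Set S) (F : J → Set W)
    (hEfin : ∀ i, (E i).Finite) (hEne : ∀ i, (E i).Nonempty)
    (hFfin : ∀ j, (F j).Finite) (hFne : ∀ j, (F j).Nonempty)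
    (A : Set S) (B : Set W) :
    uBD (fun p : I × J => E p.1 ×ˢ F p.2) (A ×ˢ B) = uBD E A * uBD F B := by
  have hEFfin : ∀ p : I × J, (E p.1 ×ˢ F p.2).Finite := fun p => (hEfin p.1).prod (hFfin p.2)
  have hEFne : ∀ p : I × J, (E p.1 ×ˢ F p.2).Nonempty := fun p => (hEne p.1).prod (hFne p.2)
  apply le_antisymm
  · refine csSup_le ⟨0, zero_mem_uBDSet _ _⟩ fun γ hγ => le_mul_of_forall_lt₀ ?_
    exact fun a ha b hb => le_mul_of_mem_uBDSet_prod hEfin hEne hFfin hFne hγ ha hb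
  · refine mul_le_of_forall_lt_of_nonneg (uBD_nonneg hEfin hEne)
      (uBD_nonneg hEFfin hEFne) fun a _ ha b hb0 hb => ?_
    exact le_uBD_of_mem_uBDSet hEFfin hEFne
      (mul_mem_uBDSet_prod (mem_uBDSet_of_lt_uBD ha) (mem_uBDSet_of_lt_uBD hb) hb0)

theorem uBD_prod {S W : Type*} [Monoid S] [Monoid W]
    {I J : Type*} [Preorder I] [Preorder J] [Nonempty I] [Nonempty J]
    (E : I → Set S) (F : J → Set W)
    (hEfin : ∀ i, (E i).Finite) (hEne : ∀ i, (E i).Nonempty)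
    (hFfin : ∀ j, (F j).Finite) (hFne : ∀ j, (F j).Nonempty)
    (hIdir : ∀ i j : I, ∃ k, i ≤ k ∧ j ≤ k) (hJdir : ∀ i j : J, ∃ k, i ≤ k ∧ j ≤ k)
    (A : Set S) (B : Set W) :
    uBD (fun p : I × J => E p.1 ×ˢ F p.2) (A ×ˢ B) = uBD E A * uBD F B :=
  uBD_prod_general E F hEfin hEne hFfin hFne A B
end

section
/- Let S and W be discrete semigroups with identities and nets E, F in P_f(S), P_f(W) respectively, and suppose d*_{E*F}(A×B) = d*_E(A)·d*_F(B) for all A ⊆ S, B ⊆ W. Then for any p ∈ D*_E and q ∈ D*_F, there exists r ∈ D*_{E*F} with ι̃(r) = (p,q), where ι̃ : β(S×W) → βS × βW is the continuous extension of the inclusion. -/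
/-!
Sets of upper Banach density zero form an ideal, because upper Banach density is monotone and
subadditive. By the product hypothesis every member of the product filter `p ×ˢ q` has positive
density, so `p ×ˢ q` is compatible with the filter of sets whose complement has density zero, and
any ultrafilter refining both lies over `(p, q)` and contains no set of density zero.
-/

open scoped Classical symmDiff

theorem Filter.exists_ultrafilter_le_forall_not_null {α : Type*} (null : Set α → Prop)
    (null_empty : null ∅) (null_mono : ∀ t, null t → ∀ s ⊆ t, null s)
    (null_union : ∀ s, null s → ∀ t, null t → null (s ∪ t))
    {f : Filter α} (hf : ∀ s ∈ f, ¬ null s) :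
    ∃ u : Ultrafilter α, ↑u ≤ f ∧ ∀ s ∈ u, ¬ null s := by
  set conull : Filter α := Filter.comk null null_empty null_mono null_union
  have : (f ⊓ conull).NeBot := Filter.inf_neBot_iff.2 fun s hs t ht => by
    by_contra hst
    exact hf s hs (null_mono _ ht s fun x hxs hxt => hst ⟨x, hxs, hxt⟩)
  obtain ⟨u, hu⟩ := Filter.exists_ultrafilter_le (f ⊓ conull)
  refine ⟨u, hu.trans inf_le_left, fun s hs hnull => u.compl_notMem_iff.2 hs ?_⟩
  exact (hu.trans inf_le_right) (by simpa [conull] using hnull)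

theorem netShift_finite_s9 {T : Type*} [Mul T] {X : Set T} (hX : X.Finite) :
    ∀ s, (netShift X s).Finite
  | none => hX
  | some _ => hX.image _

theorem ncard_netShift_le_s9 {T : Type*} [Mul T] {X : Set T} (hX : X.Finite) :
    ∀ s, (netShift X s).ncard ≤ X.ncard
  | none => le_rfl
  | some _ => Set.ncard_image_le hX

section UpperBanachDensity

variable {T K : Type*} [Mul T] [Preorder K] (G : K → Set T)

def densityLevels (A : Set T) : Set ℝ :=
  {α : ℝ | ∀ i₀ : K, ∃ i, i₀ ≤ i ∧ ∃ s : Option T,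
    α * ((G i).ncard : ℝ) ≤ ((A ∩ netShift (G i) s).ncard : ℝ)}

theorem uBD_eq_sSup_densityLevels (A : Set T) : uBD G A = sSup (densityLevels G A) := rfl

theorem zero_mem_densityLevels (A : Set T) : (0 : ℝ) ∈ densityLevels G A :=
  fun i₀ => ⟨i₀, le_rfl, none, by simp⟩

variable {G}

theorem sub_mem_densityLevels_of_union (hdir : ∀ i j : K, ∃ k, i ≤ k ∧ j ≤ k)
    {A B : Set T} {α a : ℝ} (hα : α ∈ densityLevels G (A ∪ B))
    (ha : a ∉ densityLevels G A) : α - a ∈ densityLevels G B := by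
  simp only [densityLevels, Set.mem_ofPred_eq, not_forall, not_exists, not_and, not_le] at ha
  obtain ⟨i₀, hA⟩ := ha
  intro i₁
  obtain ⟨k, hk₀, hk₁⟩ := hdir i₀ i₁
  obtain ⟨i, hki, s, hs⟩ := hα k
  refine ⟨i, hk₁.trans hki, s, ?_⟩
  have hunion : (((A ∪ B) ∩ netShift (G i) s).ncard : ℝ) ≤
      (A ∩ netShift (G i) s).ncard + (B ∩ netShift (G i) s).ncard := by
    rw [Set.union_inter_distrib_right]
    exact_mod_cast Set.ncard_union_le _ _
  linarith [hA i (hk₀.trans hki) s]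

variable (hfin : ∀ i, (G i).Finite) (hne : ∀ i, (G i).Nonempty)
include hfin hne

theorem bddAbove_densityLevels [Nonempty K] (A : Set T) : BddAbove (densityLevels G A) := by
  refine ⟨1, fun α hα => ?_⟩
  obtain ⟨i, -, s, hs⟩ := hα (Classical.arbitrary K)
  have hcard : ((A ∩ netShift (G i) s).ncard : ℝ) ≤ (G i).ncard := by
    exact_mod_cast (Set.ncard_inter_le_ncard_right _ _ (netShift_finite_s9 (hfin i) s)).trans
      (ncard_netShift_le_s9 (hfin i) s)
  exact le_of_mul_le_mul_right (by linarith)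
    (Nat.cast_pos.2 ((Set.ncard_pos (hfin i)).2 (hne i)))

theorem uBD_mono [Nonempty K] {A B : Set T} (hAB : A ⊆ B) : uBD G A ≤ uBD G B := by
  refine csSup_le_csSup (bddAbove_densityLevels hfin hne B) ⟨0, zero_mem_densityLevels _ A⟩ ?_
  intro α hα i₀
  obtain ⟨i, hi, s, hs⟩ := hα i₀
  refine ⟨i, hi, s, hs.trans ?_⟩
  exact_mod_cast Set.ncard_le_ncard (Set.inter_subset_inter_left _ hAB)
    ((netShift_finite_s9 (hfin i) s).subset Set.inter_subset_right)

theorem uBD_empty_nonpos [Nonempty K] : uBD G ∅ ≤ 0 := by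
  refine Real.sSup_nonpos fun α hα => ?_
  obtain ⟨i, -, s, hs⟩ := hα (Classical.arbitrary K)
  simp only [Set.empty_inter, Set.ncard_empty, Nat.cast_zero] at hs
  exact nonpos_of_mul_nonpos_left hs (Nat.cast_pos.2 ((Set.ncard_pos (hfin i)).2 (hne i)))

theorem uBD_union_le [Nonempty K] (hdir : ∀ i j : K, ∃ k, i ≤ k ∧ j ≤ k) (A B : Set T) :
    uBD G (A ∪ B) ≤ uBD G A + uBD G B := by
  refine csSup_le ⟨0, zero_mem_densityLevels _ _⟩ fun α hα => ?_
  refine le_of_forall_pos_le_add fun ε hε => ?_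
  have hA : uBD G A + ε ∉ densityLevels G A := fun hmem => by
    have := le_csSup (bddAbove_densityLevels hfin hne A) hmem
    rw [← uBD_eq_sSup_densityLevels] at this
    linarith
  have hB := le_csSup (bddAbove_densityLevels hfin hne B)
    (sub_mem_densityLevels_of_union hdir hα hA)
  rw [← uBD_eq_sSup_densityLevels] at hB
  linarith

end UpperBanachDensity

theorem exists_ultrafilter_above_pair {S W : Type*} [Monoid S] [Monoid W]
    {I J : Type*} [Preorder I] [Preorder J] [Nonempty I] [Nonempty J]
    (E : I → Set S) (F : J → Set W)
    (hEfin : ∀ i, (E i).Finite) (hEne : ∀ i, (E i).Nonempty)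
    (hFfin : ∀ j, (F j).Finite) (hFne : ∀ j, (F j).Nonempty)
    (hIdir : ∀ i j : I, ∃ k, i ≤ k ∧ j ≤ k) (hJdir : ∀ i j : J, ∃ k, i ≤ k ∧ j ≤ k)
    (hprod : ∀ (A : Set S) (B : Set W),
      uBD (fun p : I × J => E p.1 ×ˢ F p.2) (A ×ˢ B) = uBD E A * uBD F B)
    (p : Ultrafilter S) (q : Ultrafilter W)
    (hp : ∀ A ∈ p, 0 < uBD E A) (hq : ∀ B ∈ q, 0 < uBD F B) :
    ∃ r : Ultrafilter (S × W),
      (∀ C ∈ r, 0 < uBD (fun p : I × J => E p.1 ×ˢ F p.2) C) ∧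
      Ultrafilter.map Prod.fst r = p ∧ Ultrafilter.map Prod.snd r = q := by
  set G : I × J → Set (S × W) := fun p => E p.1 ×ˢ F p.2
  have hGfin : ∀ k, (G k).Finite := fun k => (hEfin k.1).prod (hFfin k.2)
  have hGne : ∀ k, (G k).Nonempty := fun k => (hEne k.1).prod (hFne k.2)
  have hGdir : ∀ a b : I × J, ∃ c, a ≤ c ∧ b ≤ c := fun a b => by
    obtain ⟨k₁, h₁, h₁'⟩ := hIdir a.1 b.1
    obtain ⟨k₂, h₂, h₂'⟩ := hJdir a.2 b.2
    exact ⟨(k₁, k₂), ⟨h₁, h₂⟩, ⟨h₁', h₂'⟩⟩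
  have hpq : ∀ C ∈ (p : Filter S) ×ˢ (q : Filter W), ¬ uBD G C ≤ 0 := fun C hC => by
    obtain ⟨A, hA, B, hB, hAB⟩ := Filter.mem_prod_iff.1 hC
    have : 0 < uBD G (A ×ˢ B) := (hprod A B).symm ▸ mul_pos (hp A hA) (hq B hB)
    exact not_le.2 (this.trans_le (uBD_mono hGfin hGne hAB))
  obtain ⟨r, hr, hrpos⟩ := Filter.exists_ultrafilter_le_forall_not_null (fun C => uBD G C ≤ 0)
    (uBD_empty_nonpos hGfin hGne) (fun _ ht _ hst => (uBD_mono hGfin hGne hst).trans ht)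
    (fun _ hs _ ht => (uBD_union_le hGfin hGne hGdir _ _).trans (by linarith)) hpq
  exact ⟨r, fun C hC => not_le.1 (hrpos C hC),
    Ultrafilter.coe_le_coe.1 (Filter.tendsto_fst.mono_left hr),
    Ultrafilter.coe_le_coe.1 (Filter.tendsto_snd.mono_left hr)⟩
end
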